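/- Minorization implies contraction on the small set: if there exist ε > 0, a positive integer M, a probability measure ν, and a measurable set C ⊆ X such that (τ^M ∘ δ_x)(A) ≥ ε ν(A) for all measurable A and all x ∈ C, then for any x₁, x₂ ∈ C, ‖τ^M ∘ δ_{x₁} − τ^M ∘ δ_{x₂}‖_TV ≤ 1 − ε. -/

import Mathlib

open MeasureTheory ProbabilityTheory

/-- The `N`-step distribution of a Markov kernel `τ` from an initial distribution `ρ`. -/
noncomputable def stepN {X : Type*} [MeasurableSpace X] (τ : Kernel X X) (ρ : Measure X) :
    ℕ → Measure X
  | 0 => ρ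
  | N + 1 => (stepN τ ρ N).bind (fun x => τ x)

/-- The total variation distance between two measures. -/
noncomputable def tvDist {X : Type*} [MeasurableSpace X] (μ ν : Measure X) : ℝ :=
  ⨆ s : {s : Set X // MeasurableSet s}, |(μ s).toReal - (ν s).toReal|

/-!
The two `M`-step laws from points of `C` share the common component `ε ν`, so on any measurable
`s` their difference is at most `(1 - ε ν sᶜ) - ε ν s = 1 - ε`.
-/

section

variable {X : Type*} [MeasurableSpace X]

instance isProbabilityMeasure_stepN (τ : Kernel X X) [IsMarkovKernel τ]
    (ρ : Measure X) [IsProbabilityMeasure ρ] (N : ℕ) : IsProbabilityMeasure (stepN τ ρ N) := by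
  induction N with
  | zero => rwa [stepN]
  | succ n ih =>
    constructor
    rw [stepN, Measure.bind_apply MeasurableSet.univ τ.measurable.aemeasurable]
    simp

lemma mul_measureReal_le_of_ofReal_mul_le {μ ν : Measure X} [IsFiniteMeasure μ] {ε : ℝ}
    (hε : 0 ≤ ε) {A : Set X} (h : ENNReal.ofReal ε * ν A ≤ μ A) : ε * ν.real A ≤ μ.real A := by
  simpa [measureReal_def, ENNReal.toReal_mul, ENNReal.toReal_ofReal hε] using
    ENNReal.toReal_mono (measure_ne_top μ A) h

lemma measureReal_sub_le_one_sub_of_minorized {μ σ ν : Measure X} [IsProbabilityMeasure μ]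
    [IsProbabilityMeasure σ] [IsProbabilityMeasure ν] {ε : ℝ} (hε : 0 ≤ ε)
    (hμ : ∀ A, MeasurableSet A → ENNReal.ofReal ε * ν A ≤ μ A)
    (hσ : ∀ A, MeasurableSet A → ENNReal.ofReal ε * ν A ≤ σ A) {s : Set X} (hs : MeasurableSet s) :
    μ.real s - σ.real s ≤ 1 - ε := by
  have hμ_compl := mul_measureReal_le_of_ofReal_mul_le hε (hμ sᶜ hs.compl)
  have hσ_s := mul_measureReal_le_of_ofReal_mul_le hε (hσ s hs)
  rw [probReal_compl_eq_one_sub hs, probReal_compl_eq_one_sub hs] at hμ_compl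
  linarith

lemma tvDist_le {μ ν : Measure X} {c : ℝ}
    (h : ∀ s, MeasurableSet s → |μ.real s - ν.real s| ≤ c) : tvDist μ ν ≤ c :=
  have : Nonempty {s : Set X // MeasurableSet s} := ⟨⟨∅, .empty⟩⟩
  ciSup_le fun s => h s.1 s.2

lemma tvDist_le_one_sub_of_minorized {μ σ ν : Measure X}
    [IsProbabilityMeasure μ] [IsProbabilityMeasure σ] [IsProbabilityMeasure ν] {ε : ℝ}
    (hε : 0 ≤ ε) (hμ : ∀ A, MeasurableSet A → ENNReal.ofReal ε * ν A ≤ μ A)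
    (hσ : ∀ A, MeasurableSet A → ENNReal.ofReal ε * ν A ≤ σ A) : tvDist μ σ ≤ 1 - ε :=
  tvDist_le fun _ hs => abs_sub_le_iff.2
    ⟨measureReal_sub_le_one_sub_of_minorized hε hμ hσ hs,
      measureReal_sub_le_one_sub_of_minorized hε hσ hμ hs⟩

end

theorem minorization_tv_contraction_general {X : Type*} [MeasurableSpace X]
    (τ : Kernel X X) [IsMarkovKernel τ]
    (ε : ℝ) (hε : 0 < ε) (M : ℕ)
    (ν : Measure X) [IsProbabilityMeasure ν] (C : Set X)
    (hminor : ∀ x ∈ C, ∀ A : Set X, MeasurableSet A →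
      ENNReal.ofReal ε * ν A ≤ stepN τ (Measure.dirac x) M A)
    (x₁ x₂ : X) (hx₁ : x₁ ∈ C) (hx₂ : x₂ ∈ C) :
    tvDist (stepN τ (Measure.dirac x₁) M) (stepN τ (Measure.dirac x₂) M) ≤ 1 - ε :=
  tvDist_le_one_sub_of_minorized hε.le (hminor x₁ hx₁) (hminor x₂ hx₂)

theorem minorization_tv_contraction {X : Type*} [MeasurableSpace X]
    (τ : Kernel X X) [IsMarkovKernel τ]
    (ε : ℝ) (hε : 0 < ε) (M : ℕ) (hM : 0 < M)
    (ν : Measure X) [IsProbabilityMeasure ν] (C : Set X) (hC : MeasurableSet C)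
    (hminor : ∀ x ∈ C, ∀ A : Set X, MeasurableSet A →
      ENNReal.ofReal ε * ν A ≤ stepN τ (Measure.dirac x) M A)
    (x₁ x₂ : X) (hx₁ : x₁ ∈ C) (hx₂ : x₂ ∈ C) :
    tvDist (stepN τ (Measure.dirac x₁) M) (stepN τ (Measure.dirac x₂) M) ≤ 1 - ε :=
  minorization_tv_contraction_general τ ε hε M ν C hminor x₁ x₂ hx₁ hx₂
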